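/- The metric space $X=\{((a_i)_{i=1}^\infty,k): k\in\mathbb{Z}^+,\ a_i\in\mathbb{Z},\ a_i=0\text{ for }i>k\}\subseteq(\bigoplus_{i=1}^\infty\mathbb{Z})\times\mathbb{Z}$, with metric $d_1(((x_i),a),((y_i),b))=\sum_{i=1}^\infty|x_i-y_i|+|b-a|$, does not have asymptotic property C. -/

import Mathlib

/-! The slice of level `m + 1` of `X` contains an isometric copy of `(ℤ^m, ℓ¹)`. Property C for
`Rᵢ = i + 3` yields `n + 1` families of sets of diameter `≤ b`, each `3`-disjoint; on `ℤ^m` this is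
a colouring with `n + 1` colours whose monochromatic pieces are `b`-bounded and have pairwise
disjoint `1`-neighbourhoods. Every piece then has an `ℓ¹`-neighbourhood about `(m - b)/(b + 1)`
times larger than itself, and counting in a large box `[0, L]^m` gives `m ≤ b + (b + 1)(n + 1)`,
which is false for `m` large. -/

noncomputable section
open Metric Set
open scoped ENNReal

/-- A family of subsets is `R`-bounded if every member has diameter at most `R`. -/
def RBounded {X : Type*} [PseudoMetricSpace X] (R : ℝ) (U : Set (Set X)) : Prop :=
  ∀ A ∈ U, ∀ x ∈ A, ∀ y ∈ A, dist x y ≤ R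

/-- A family of subsets is `r`-disjoint if distinct members are at distance at least `r`. -/
def RDisjoint {X : Type*} [PseudoMetricSpace X] (r : ℝ) (U : Set (Set X)) : Prop :=
  ∀ A ∈ U, ∀ B ∈ U, A ≠ B → ∀ x ∈ A, ∀ y ∈ B, r ≤ dist x y

/-- A family of subsets is uniformly bounded if it is `R`-bounded for some `R`. -/
def UniformlyBounded {X : Type*} [PseudoMetricSpace X] (U : Set (Set X)) : Prop :=
  ∃ R : ℝ, RBounded R U

/-- `asdim X ≤ n`: for every `r > 0` there are `n+1` uniformly bounded, `r`-disjoint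
families of subsets of `X` whose union covers `X`. -/
def AsdimLE (X : Type*) [PseudoMetricSpace X] (n : ℕ) : Prop :=
  ∀ r : ℝ, 0 < r → ∃ U : Fin (n + 1) → Set (Set X),
    (∀ i, UniformlyBounded (U i)) ∧ (∀ i, RDisjoint r (U i)) ∧
    (Set.univ : Set X) ⊆ ⋃ i, ⋃₀ U i

/-- Uniformly expansive map. -/
def UniformlyExpansive {X Y : Type*} [PseudoMetricSpace X] [PseudoMetricSpace Y]
    (f : X → Y) : Prop :=
  ∀ R : ℝ, 0 < R → ∃ S : ℝ, ∀ x x' : X, dist x x' ≤ R → dist (f x) (f x') ≤ S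

open Fin.NatCast in
/-- Asymptotic property C. -/
def AsymptoticPropertyC (X : Type*) [PseudoMetricSpace X] : Prop :=
  ∀ R : ℕ → ℝ, StrictMono R → (∀ i, 0 < R i) →
    ∃ n : ℕ, ∃ U : Fin (n + 1) → Set (Set X),
      (∀ i, UniformlyBounded (U i)) ∧ (∀ i, RDisjoint (R i) (U i)) ∧
      (Set.univ : Set X) ⊆ ⋃ i, ⋃₀ U i
/-- The space of Example 5.1: `{((a_i)_{i≥1}, k) : k ≥ 1, a_i = 0 for i > k}` with the
`ℓ¹`-metric `d₁`.  Here `coords n` plays the role of `a_{n+1}`. -/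
structure EPt where
  lvl : ℕ
  coords : ℕ → ℤ
  lvl_pos : 1 ≤ lvl
  coords_eq_zero : ∀ i, lvl ≤ i → coords i = 0

def EPt.f (p : EPt) : Option ℕ → ℝ :=
  fun o => o.elim (p.lvl : ℝ) fun i => (p.coords i : ℝ)

lemma EPt.memlp (p : EPt) : Memℓp p.f 1 := by
  apply memℓp_gen
  apply summable_of_finite_support
  apply Set.Finite.subset (Set.Finite.insert none ((Set.finite_Iio p.lvl).image some))
  intro x hx
  rcases x with _ | i
  · exact Set.mem_insert _ _
  · right
    refine Set.mem_image_of_mem _ ?_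
    by_contra h
    apply hx
    have h0 : p.coords i = 0 := p.coords_eq_zero i (not_lt.mp h)
    simp [EPt.f, h0]

def EPt.F (p : EPt) : lp (fun _ : Option ℕ => ℝ) 1 := ⟨p.f, p.memlp⟩

instance : PseudoMetricSpace EPt := PseudoMetricSpace.induced EPt.F inferInstance

open Finset Filter Topology

section L1Dist

variable {m : ℕ}

def l1Dist (v w : Fin m → ℤ) : ℕ := ∑ i, (v i - w i).natAbs

lemma l1Dist_comm (v w : Fin m → ℤ) : l1Dist v w = l1Dist w v :=
  Finset.sum_congr rfl fun i _ => by omega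

lemma l1Dist_triangle (u v w : Fin m → ℤ) : l1Dist u w ≤ l1Dist u v + l1Dist v w := by
  unfold l1Dist
  rw [← Finset.sum_add_distrib]
  exact Finset.sum_le_sum fun i _ => by omega

lemma l1Dist_add_single (t : Fin m → ℤ) (i : Fin m) : l1Dist (t + Pi.single i 1) t = 1 := by
  simp only [l1Dist, Pi.add_apply, add_sub_cancel_left]
  rw [Fintype.sum_eq_single i fun j hj => by simp [Pi.single_eq_of_ne hj]]
  simp

lemma l1Dist_le_two_of_add_single_eq {t t' : Fin m → ℤ} {i j : Fin m}
    (h : t + Pi.single i 1 = t' + Pi.single j 1) : l1Dist t t' ≤ 2 :=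
  calc l1Dist t t' ≤ l1Dist t (t + Pi.single i 1) + l1Dist (t + Pi.single i 1) t' :=
        l1Dist_triangle _ _ _
    _ = 2 := by rw [l1Dist_comm, l1Dist_add_single, h, l1Dist_add_single]

lemma card_ne_le_l1Dist (v w : Fin m → ℤ) : #{i | v i ≠ w i} ≤ l1Dist v w := by
  rw [Finset.card_eq_sum_ones, Finset.sum_filter]
  exact Finset.sum_le_sum fun i _ => by split_ifs <;> omega

lemma sub_le_card_eq_of_l1Dist_le {b : ℕ} {v w : Fin m → ℤ} (h : l1Dist v w ≤ b) :
    m - b ≤ #{i | v i = w i} := by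
  have hsplit := card_filter_add_card_filter_not (s := Finset.univ) fun i => v i = w i
  simp only [← ne_eq, card_univ, Fintype.card_fin] at hsplit
  have := card_ne_le_l1Dist v w
  omega

end L1Dist

lemma card_Icc_zero_const (m L : ℕ) : #(Icc (0 : Fin m → ℤ) fun _ => (L : ℤ)) = (L + 1) ^ m := by
  simp [Pi.card_Icc]

lemma add_single_mem_Icc {m L : ℕ} {t : Fin m → ℤ} (ht : t ∈ Finset.Icc 0 fun _ => (L : ℤ))
    (i : Fin m) : t + Pi.single i 1 ∈ Finset.Icc 0 fun _ => ((L + 1 : ℕ) : ℤ) := by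
  rw [Finset.mem_Icc] at ht ⊢
  refine ⟨fun j => ?_, fun j => ?_⟩ <;>
  · have := ht.1 j; have := ht.2 j
    simp only [Pi.add_apply, Pi.single_apply, Pi.zero_apply] at *
    split_ifs <;> omega

lemma exists_mul_pow_lt {a c : ℕ} (h : c < a) (m : ℕ) :
    ∃ L : ℕ, c * (L + 2) ^ m < a * (L + 1) ^ m := by
  have hlim : Tendsto (fun L : ℕ => (c : ℝ) * (1 + 1 / ((L : ℝ) + 1)) ^ m) atTop (𝓝 c) := by
    simpa using ((tendsto_one_div_add_atTop_nhds_zero_nat.const_add 1).pow m).const_mul (c : ℝ)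
  obtain ⟨L, hL⟩ := (hlim.eventually (gt_mem_nhds (show (c : ℝ) < a by exact_mod_cast h))).exists
  refine ⟨L, ?_⟩
  have hL1 : (0 : ℝ) < (L + 1) ^ m := by positivity
  rw [show 1 + 1 / ((L : ℝ) + 1) = (L + 2) / (L + 1) by field_simp; ring, div_pow,
    ← mul_div_assoc, div_lt_iff₀ hL1] at hL
  exact_mod_cast hL

def EPt.ofFin {m : ℕ} (v : Fin m → ℤ) : EPt where
  lvl := m + 1
  coords j := if h : j < m then v ⟨j, h⟩ else 0
  lvl_pos := by omega
  coords_eq_zero _ hi := dif_neg (by omega)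

lemma EPt.coe_F (p : EPt) : ⇑p.F = p.f := rfl

lemma EPt.dist_ofFin {m : ℕ} (v w : Fin m → ℤ) :
    dist (EPt.ofFin v) (EPt.ofFin w) = l1Dist v w := by
  change dist (ofFin v).F (ofFin w).F = _
  rw [dist_eq_norm, lp.norm_eq_tsum_rpow (by simp)]
  simp only [ENNReal.toReal_one, Real.rpow_one, div_one, lp.coeFn_sub, Pi.sub_apply, EPt.coe_F]
  rw [tsum_eq_sum (s := (range m).map Function.Embedding.some), sum_map,
    ← Fin.sum_univ_eq_sum_range, l1Dist]
  · push_cast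
    refine Finset.sum_congr rfl fun i _ => ?_
    simp [EPt.f, ofFin]
  · rintro (_ | j) hj
    · simp [EPt.f, ofFin]
    · simp only [Finset.mem_map, Finset.mem_range, Function.Embedding.some_apply,
        Option.some.injEq, exists_eq_right, not_lt] at hj
      simp [EPt.f, ofFin, dif_neg (not_lt.2 hj)]

section Coloring

variable {m b : ℕ} {ι : Type*} [Fintype ι] (col : (Fin m → ℤ) → ι) (r : (Fin m → ℤ) → Fin m → ℤ)

/-- `r v` is a base point of the piece of `v`. Count the pairs `(t, i)` in `[0, L]^m × Fin m`
with `t i = r t i`: there are at least `(m - b)(L + 1)^m` of them, and `(t, i) ↦ (t + eᵢ, col t)`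
maps them at most `(b + 1)`-to-one into `[0, L + 1]^m × ι`, since the pairs over one point come
from a single piece and each records a coordinate where `t + eᵢ` differs from its base point. -/
lemma sub_mul_pow_le_of_l1Dist_coloring (hr : ∀ v, l1Dist v (r v) ≤ b)
    (hloc : ∀ v w, col v = col w → l1Dist v w ≤ 2 → r v = r w) (L : ℕ) :
    (m - b) * (L + 1) ^ m ≤ (b + 1) * Fintype.card ι * (L + 2) ^ m := by
  classical
  set W : Finset (Fin m → ℤ) := Icc 0 fun _ => (L : ℤ)
  set W' : Finset (Fin m → ℤ) := Icc 0 fun _ => ((L + 1 : ℕ) : ℤ)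
  set E := (W ×ˢ Finset.univ).filter fun q : (Fin m → ℤ) × Fin m => q.1 q.2 = r q.1 q.2
  set Φ : (Fin m → ℤ) × Fin m → (Fin m → ℤ) × ι := fun q => (q.1 + Pi.single q.2 1, col q.1)
  have hlower : (m - b) * #W ≤ #E := by
    rw [card_filter, sum_product, mul_comm, ← smul_eq_mul, ← sum_const]
    refine sum_le_sum fun t _ => ?_
    dsimp only
    rw [← card_filter]
    exact sub_le_card_eq_of_l1Dist_le (hr t)
  have hfiber : ∀ a ∈ E.image Φ, #{q ∈ E | Φ q = a} ≤ b + 1 := by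
    intro a ha
    obtain ⟨q₀, -, rfl⟩ := mem_image.1 ha
    calc #{q ∈ E | Φ q = Φ q₀} ≤ #{i | (Φ q₀).1 i ≠ r q₀.1 i} := by
          refine card_le_card_of_injOn Prod.snd (fun q hq => ?_) fun q hq q' hq' hqq' => ?_
          · simp only [coe_filter, Set.mem_ofPred_eq, E, mem_filter, Φ, Prod.mk.injEq] at hq ⊢
            obtain ⟨⟨-, hbase⟩, hpt, hcol⟩ := hq
            rw [← hloc _ _ hcol (l1Dist_le_two_of_add_single_eq hpt), ← hpt]
            simp [hbase]
          · simp only [coe_filter, Set.mem_ofPred_eq, Φ, Prod.mk.injEq] at hq hq'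
            refine Prod.ext (add_right_cancel (b := Pi.single q.2 1) ?_) hqq'
            rw [hq.2.1, ← hq'.2.1, hqq']
      _ ≤ l1Dist (Φ q₀).1 (r q₀.1) := card_ne_le_l1Dist _ _
      _ ≤ l1Dist (Φ q₀).1 q₀.1 + l1Dist q₀.1 (r q₀.1) := l1Dist_triangle _ _ _
      _ ≤ b + 1 := by rw [l1Dist_add_single]; linarith [hr q₀.1]
  have himage : E.image Φ ⊆ W' ×ˢ Finset.univ := by
    simp only [subset_iff, Finset.mem_image, E, mem_filter, mem_product, Finset.mem_univ,
      and_true]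
    rintro _ ⟨q, ⟨ht, -⟩, rfl⟩
    exact add_single_mem_Icc ht q.2
  calc (m - b) * (L + 1) ^ m = (m - b) * #W := by rw [card_Icc_zero_const]
    _ ≤ #E := hlower
    _ ≤ (b + 1) * #(E.image Φ) := card_le_mul_card_image _ _ hfiber
    _ ≤ (b + 1) * #(W' ×ˢ Finset.univ) := by gcongr
    _ = (b + 1) * Fintype.card ι * (L + 2) ^ m := by
      rw [card_product, card_Icc_zero_const, card_univ]; ring

lemma le_of_l1Dist_coloring (hr : ∀ v, l1Dist v (r v) ≤ b)
    (hloc : ∀ v w, col v = col w → l1Dist v w ≤ 2 → r v = r w) :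
    m ≤ b + (b + 1) * Fintype.card ι := by
  by_contra! h
  obtain ⟨L, hL⟩ := exists_mul_pow_lt (a := m - b) (c := (b + 1) * Fintype.card ι) (by omega) m
  exact hL.not_ge (sub_mul_pow_le_of_l1Dist_coloring col r hr hloc L)

end Coloring

section Cover

variable {X : Type*} [PseudoMetricSpace X] {ι : Type*}

lemma RDisjoint.mono {r s : ℝ} {U : Set (Set X)} (hrs : r ≤ s) (h : RDisjoint s U) :
    RDisjoint r U :=
  fun A hA B hB hAB x hx y hy => hrs.trans (h A hA B hB hAB x hx y hy)

lemma exists_nat_rBounded [Finite ι] {U : ι → Set (Set X)} (h : ∀ i, UniformlyBounded (U i)) :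
    ∃ b : ℕ, ∀ i, RBounded b (U i) := by
  choose R hR using h
  obtain ⟨M, hM⟩ := Finite.exists_le R
  exact ⟨⌈M⌉₊, fun i A hA x hx y hy =>
    (hR i A hA x hx y hy).trans ((hM i).trans (Nat.le_ceil M))⟩

lemma le_of_isometry_of_cover [Fintype ι] {m b : ℕ} {U : ι → Set (Set X)}
    (hb : ∀ i, RBounded b (U i)) (hsep : ∀ i, RDisjoint 3 (U i))
    (hcov : (univ : Set X) ⊆ ⋃ i, ⋃₀ U i) {e : (Fin m → ℤ) → X}
    (he : ∀ v w, dist (e v) (e w) = l1Dist v w) :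
    m ≤ b + (b + 1) * Fintype.card ι := by
  have hpiece : ∀ v, ∃ p : ι × Set X, p.2 ∈ U p.1 ∧ e v ∈ p.2 := by
    intro v
    simpa using hcov (mem_univ (e v))
  choose piece hpiece hmem using hpiece
  set r : (Fin m → ℤ) → Fin m → ℤ := fun v => Classical.epsilon fun w => piece w = piece v
  have hr_piece : ∀ v, piece (r v) = piece v := fun v =>
    Classical.epsilon_spec (p := fun w => piece w = piece v) ⟨v, rfl⟩
  refine le_of_l1Dist_coloring (fun v => (piece v).1) r (fun v => ?_) fun v w hcol hvw => ?_
  · have := hb _ _ (hpiece v) _ (hmem v) _ (hr_piece v ▸ hmem (r v))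
    rwa [he, Nat.cast_le] at this
  · suffices piece v = piece w by simp only [r, this]
    by_contra hne
    have := hsep _ _ (hpiece v) _ (hcol ▸ hpiece w) (fun h => hne (Prod.ext hcol h)) _ (hmem v)
      _ (hmem w)
    rw [he] at this
    exact_mod_cast (this.trans (Nat.cast_le.2 hvw)).not_gt (by norm_num)

end Cover

/-- The space `X = {((a_i)_{i≥1}, k) : k ≥ 1, a_i = 0 for i > k}` with the `ℓ¹`-metric
does not have asymptotic property C. -/
theorem ept_not_apc : ¬ AsymptoticPropertyC EPt := by
  intro h
  obtain ⟨n, U, hbdd, hdisj, hcov⟩ := h (fun i => i + 3) (fun i j hij => by simpa using hij)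
    fun i => by positivity
  obtain ⟨b, hb⟩ := exists_nat_rBounded hbdd
  have hsep : ∀ i, RDisjoint 3 (U i) := fun i =>
    Fin.cast_val_eq_self i ▸ (hdisj i).mono (by simp)
  have := le_of_isometry_of_cover (m := b + (b + 1) * (n + 1) + 1) hb hsep hcov EPt.dist_ofFin
  simp at this
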